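/- Let $K$ be a commutative $\mathbb{Q}$-algebra and define the partial derivative with respect to the multiplicative formal group law $x * y = x + y - xy$ by $(\partial G)(x_1, \dots, x_{n+1}) = G(x_1 * x_2, x_3, \dots) - G(x_1, x_3, \dots) - G(x_2, x_3, \dots) + G(0, x_3, \dots)$. Then for $n > 0$, the kernel of $\partial^{n-1}: K[[x]] \to K[[x_1, \dots, x_n]]$ is the $K$-linear span of $\lg_r(x) = \frac{1}{r!}(\log(1-x))^r$ for $0 \le r < n$. -/

import Mathlib

variable {K : Type*} [CommRing K] [Algebra ℚ K]

/-- Substitution of a multivariate power series with vanishing constant term into a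
one-variable power series. -/
noncomputable def psubst {σ : Type*} (f : MvPowerSeries σ K) (G : PowerSeries K) :
    MvPowerSeries σ K :=
  fun d => ∑ n ∈ Finset.range ((d.sum fun _ e => e) + 1),
    PowerSeries.coeff n G * MvPowerSeries.coeff d (f ^ n)

/-- The iterated partial derivative `∂^{m-1} G` (with respect to the multiplicative formal
group law `x * y = x + y - xy`) of a one-variable power series, a power series in `m`
variables:  `(∂^{m-1} G)(x₁,…,x_m) = ∑_{I ⊆ {1,…,m}} (-1)^{m - |I|} G(x_I)`, where
`x_I = 1 - ∏_{i ∈ I} (1 - x_i)` is the `*`-sum of the variables `x_i`, `i ∈ I`. -/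
noncomputable def partialDeriv (m : ℕ) (G : PowerSeries K) : MvPowerSeries (Fin m) K :=
  ∑ I : Finset (Fin m),
    ((-1 : ℤ) ^ (m + I.card)) • psubst (1 - ∏ i ∈ I, (1 - MvPowerSeries.X i)) G

/-- The formal power series `log(1-x) = -∑_{i≥1} xⁱ/i`. -/
noncomputable def logOneSub : PowerSeries K :=
  PowerSeries.mk fun i => if i = 0 then 0 else algebraMap ℚ K (-(1 / (i : ℚ)))

/-- `lg_r(x) = (1/r!) (log(1-x))^r`. -/
noncomputable def lg (r : ℕ) : PowerSeries K :=
  ((r.factorial : ℚ)⁻¹) • (logOneSub (K := K)) ^ r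

/-!
Write `L = log(1 - x)`. From `exp ∘ L = 1 - x`, `L ∘ (1 - exp) = x` and
`exp (a + b) = exp a · exp b`, `L` turns the group law into addition: `L(x_I) = ∑_{i ∈ I} L(x_i)`,
where `x_I = 1 - ∏_{i ∈ I} (1 - x_i)`. Hence `lg_r(x_I) = (∑_{i ∈ I} L(x_i))^r / r!`, and an
alternating sum over `I ⊆ {1,…,n}` of `r`-th powers of partial sums vanishes for `r < n`.

Conversely, `lg_r = (-1)^r x^r / r! + O(x^{r+1})`, so after subtracting a combination of the `lg_r`
the first `n` coefficients of `G` vanish. If `g_m` is the first nonzero coefficient and `x^d` is a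
monomial of degree `m` involving every variable, only `I = {1,…,n}` contributes to the coefficient
of `x^d` in `∂^{n-1} G`, and it contributes `g_m` times the multinomial coefficient of `d`, because
`x_I - ∑_{i ∈ I} x_i` has order at least two.
-/

theorem Finset.sum_powerset_neg_one_pow_card_smul_sum_pow {ι R : Type*} [CommRing R]
    [DecidableEq ι] (s : Finset ι) (y : ι → R) {r : ℕ} (hr : r < s.card) :
    ∑ t ∈ s.powerset, (-1 : ℤ) ^ t.card • (∑ i ∈ t, y i) ^ r = 0 := by
  induction s using Finset.induction_on generalizing r with
  | empty => simp at hr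
  | insert a s ha ih =>
    rw [Finset.card_insert_of_notMem ha] at hr
    -- binomial expansion of `(∑ i ∈ t, y i + y a) ^ r`, with its top term split off
    have hinsert : ∀ t ∈ s.powerset, (-1 : ℤ) ^ (insert a t).card • (∑ i ∈ insert a t, y i) ^ r =
        -((-1 : ℤ) ^ t.card • (∑ i ∈ t, y i) ^ r) - ∑ m ∈ Finset.range r,
          ((-1 : ℤ) ^ t.card • (∑ i ∈ t, y i) ^ m) * (y a ^ (r - m) * r.choose m) := by
      intro t ht
      have hat : a ∉ t := fun h => ha (Finset.mem_powerset.mp ht h)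
      rw [Finset.card_insert_of_notMem hat, Finset.sum_insert hat, add_comm (y a), add_pow,
        Finset.sum_range_succ, Nat.sub_self, pow_zero, Nat.choose_self, pow_succ, mul_neg_one,
        neg_smul, smul_add, neg_add, Finset.smul_sum]
      simp only [mul_one, Nat.cast_one, smul_mul_assoc, mul_assoc]
      ring
    have hlower : ∀ m ∈ Finset.range r, ∑ t ∈ s.powerset,
        ((-1 : ℤ) ^ t.card • (∑ i ∈ t, y i) ^ m) * (y a ^ (r - m) * r.choose m) = 0 := by
      intro m hm
      rw [← Finset.sum_mul, ih (by simp at hm; omega), zero_mul]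
    rw [Finset.sum_powerset_insert ha, Finset.sum_congr rfl hinsert, Finset.sum_sub_distrib,
      Finset.sum_neg_distrib, Finset.sum_comm, Finset.sum_eq_zero hlower]
    abel

theorem Finsupp.exists_degree_eq_and_forall_ne_zero {σ : Type*} [Fintype σ] [Nonempty σ] {m : ℕ}
    (hm : Fintype.card σ ≤ m) : ∃ d : σ →₀ ℕ, d.degree = m ∧ ∀ i, d i ≠ 0 := by
  classical
  obtain ⟨i₀⟩ := ‹Nonempty σ›
  refine ⟨Finsupp.single i₀ (m - Fintype.card σ) + Finsupp.equivFunOnFinite.symm 1, ?_,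
    fun i => by simp⟩
  rw [map_add, Finsupp.degree_single, Finsupp.degree_eq_sum]
  simp
  omega

namespace MvPowerSeries

variable {σ R : Type*} [CommRing R]

theorem constantCoeff_one_sub_prod_one_sub {ι : Type*} {I : Finset ι}
    {g : ι → MvPowerSeries σ R} (hg : ∀ i ∈ I, constantCoeff (g i) = 0) :
    constantCoeff (1 - ∏ i ∈ I, (1 - g i)) = 0 := by
  rw [map_sub, map_one, map_prod,
    Finset.prod_eq_one fun i hi => by rw [map_sub, map_one, hg i hi, sub_zero], sub_self]

theorem constantCoeff_one_sub_prod_one_sub_X (I : Finset σ) :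
    constantCoeff (1 - ∏ i ∈ I, (1 - X i) : MvPowerSeries σ R) = 0 :=
  constantCoeff_one_sub_prod_one_sub fun i _ => constantCoeff_X i

theorem coeff_eq_zero_of_pderiv_eq_zero [IsAddTorsionFree R] {f : MvPowerSeries σ R}
    {j : σ} (hf : pderiv R j f = 0) {d : σ →₀ ℕ} (hd : d j ≠ 0) : coeff d f = 0 := by
  classical
  have h := congrArg (coeff (d - Finsupp.single j 1)) hf
  rw [coeff_pderiv, tsub_add_cancel_of_le (Finsupp.single_le_iff.mpr (Nat.pos_of_ne_zero hd)),
    map_zero, ← Nat.cast_succ, mul_comm, ← nsmul_eq_mul] at h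
  exact (nsmul_eq_zero_iff_right (Nat.succ_ne_zero _)).mp h

theorem pderiv_one_sub_prod_one_sub_X {I : Finset σ} {j : σ} (hj : j ∉ I) :
    pderiv R j (1 - ∏ i ∈ I, (1 - X i)) = 0 := by
  classical
  induction I using Finset.induction_on with
  | empty => simp
  | insert a I ha ih =>
    have hja : a ≠ j := fun h => hj (h ▸ Finset.mem_insert_self a I)
    have ih' := ih fun h => hj (Finset.mem_insert_of_mem h)
    rw [map_sub, pderiv_one, zero_sub, neg_eq_zero] at ih' ⊢
    rw [Finset.prod_insert ha, Derivation.leibniz, ih', map_sub, pderiv_one, pderiv_X_of_ne hja]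
    simp

theorem homogeneousComponent_pow_of_one_le_order {f : MvPowerSeries σ R}
    (hf : 1 ≤ f.order) (m : ℕ) :
    homogeneousComponent m (f ^ m) = homogeneousComponent 1 f ^ m := by
  induction m with
  | zero =>
    classical
    ext d
    rw [pow_zero, pow_zero, coeff_homogeneousComponent, coeff_one]
    split_ifs <;> simp_all [Finsupp.degree_eq_zero_iff]
  | succ m ih =>
    have hm : (m : ℕ∞) ≤ (f ^ m).order := by
      simpa using (nsmul_le_nsmul_right hf m).trans (le_order_pow m)
    rw [pow_succ, homogeneousComponent_mul_of_le_order hm hf, ih, pow_succ]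

theorem homogeneousComponent_one_one_sub_prod_one_sub_X [DecidableEq σ] (I : Finset σ) :
    homogeneousComponent 1 (1 - ∏ i ∈ I, (1 - X i) : MvPowerSeries σ R) = ∑ i ∈ I, X i := by
  induction I using Finset.induction_on with
  | empty => simp
  | insert a I ha ih =>
    set x := (1 - ∏ i ∈ I, (1 - X i) : MvPowerSeries σ R)
    have hX : homogeneousComponent 1 (X a : MvPowerSeries σ R) = X a := by
      ext d
      rw [coeff_homogeneousComponent, coeff_X]
      split_ifs <;> simp_all
    have hXx : homogeneousComponent 1 (X a * x) = 0 := by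
      have h1 : 1 ≤ (X a : MvPowerSeries σ R).order :=
        one_le_order_iff_constCoeff_eq_zero.mpr (constantCoeff_X a)
      have h2 : 1 ≤ x.order :=
        one_le_order_iff_constCoeff_eq_zero.mpr (constantCoeff_one_sub_prod_one_sub_X I)
      exact homogeneousComponent_of_lt_order_eq_zero
        (lt_of_lt_of_le (by norm_num) ((add_le_add h1 h2).trans le_order_mul))
    calc homogeneousComponent 1 (1 - ∏ i ∈ insert a I, (1 - X i))
        = homogeneousComponent 1 (X a + x - X a * x) := by
          rw [Finset.prod_insert ha]; congr 1; ring
      _ = ∑ i ∈ insert a I, X i := by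
          rw [map_sub, map_add, hX, ih, hXx, sub_zero, Finset.sum_insert ha]

theorem coeff_one_sub_prod_one_sub_X_pow [Fintype σ] {d : σ →₀ ℕ} {m : ℕ}
    (hd : d.degree = m) :
    coeff d ((1 - ∏ i, (1 - X i) : MvPowerSeries σ R) ^ m) = d.multinomial := by
  classical
  have h1 : 1 ≤ (1 - ∏ i, (1 - X i) : MvPowerSeries σ R).order :=
    one_le_order_iff_constCoeff_eq_zero.mpr (constantCoeff_one_sub_prod_one_sub_X _)
  have hcoe : (∑ i, X i : MvPowerSeries σ R) = ((∑ i, MvPolynomial.X i : MvPolynomial σ R) :) := by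
    rw [← MvPolynomial.coeToMvPowerSeries.ringHom_apply, map_sum]
    simp [MvPolynomial.coeToMvPowerSeries.ringHom_apply]
  have hcomp := coeff_homogeneousComponent m d ((1 - ∏ i, (1 - X i) : MvPowerSeries σ R) ^ m)
  rw [if_pos hd, homogeneousComponent_pow_of_one_le_order h1,
    homogeneousComponent_one_one_sub_prod_one_sub_X, hcoe, ← MvPolynomial.coe_pow,
    MvPolynomial.coeff_coe, MvPolynomial.coeff_sum_X_pow_of_fintype] at hcomp
  rw [← hcomp, if_pos (show (d.sum fun _ e => e) = m from hd)]

end MvPowerSeries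

namespace PowerSeries

theorem subst_eq_X_of_subst_eq_X {R : Type*} [CommRing R] {f g : R⟦X⟧}
    (hg : constantCoeff g = 0) (hg₁ : IsUnit (coeff 1 g)) (h : f.subst g = X) :
    g.subst f = X := by
  set g' := g.substInvOfIsUnit hg₁
  have hgg' : g.subst g' = X := subst_substInvOfIsUnit_right g hg hg₁
  have hfg' : f = g' := calc
    f = f.subst (g.subst g') := by rw [hgg', X_subst]
    _ = g' := by
      rw [← subst_comp_subst_apply (HasSubst.of_constantCoeff_zero' hg)
        (HasSubst.substInvOfIsUnit g hg₁), h, subst_X (HasSubst.substInvOfIsUnit g hg₁)]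
  rwa [hfg']

end PowerSeries

open PowerSeries

theorem constantCoeff_logOneSub : constantCoeff (logOneSub (K := K)) = 0 := by
  simp [← coeff_zero_eq_constantCoeff_apply, logOneSub]

theorem derivative_logOneSub : d⁄dX K logOneSub = -mk 1 := by
  ext n
  have hq : -(1 / ((n + 1 : ℕ) : ℚ)) * ((n : ℚ) + 1) = -1 := by field_simp; push_cast; ring
  rw [coeff_derivative, logOneSub, coeff_mk, if_neg n.succ_ne_zero,
    show ((n : K) + 1) = algebraMap ℚ K ((n : ℚ) + 1) by simp, ← map_mul, hq]
  simp

theorem logOneSub_subst_one_sub_exp : (logOneSub (K := K)).subst (1 - exp K) = X := by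
  have := IsAddTorsionFree.of_module_rat K
  have hE0 : constantCoeff (1 - exp K) = 0 := by simp [constantCoeff_exp]
  have hE : HasSubst (1 - exp K) := HasSubst.of_constantCoeff_zero' hE0
  have hgeom := congrArg (substAlgHom hE) (mk_one_mul_one_sub_eq_one K)
  simp only [map_mul, map_sub, map_one, coe_substAlgHom, subst_X hE, sub_sub_cancel] at hgeom
  -- `(L ∘ (1 - exp))' = -(∑ xⁿ)(1 - exp) · (-exp) = 1`, by `hgeom`
  refine derivative.ext ?_ ?_
  · rw [derivative_subst hE, derivative_logOneSub, ← coe_substAlgHom hE, map_neg, coe_substAlgHom,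
      map_sub, derivative_one, derivative_exp, derivative_X]
    linear_combination hgeom
  · rw [constantCoeff_X]
    exact constantCoeff_subst_eq_zero hE0 _ constantCoeff_logOneSub

theorem exp_subst_logOneSub : (exp K).subst (logOneSub (K := K)) = 1 - X := by
  have hE0 : constantCoeff (1 - exp K) = 0 := by simp [constantCoeff_exp]
  have h := subst_eq_X_of_subst_eq_X hE0 (by simp [coeff_exp]) logOneSub_subst_one_sub_exp
  rw [← coe_substAlgHom (HasSubst.of_constantCoeff_zero' constantCoeff_logOneSub),
    map_sub, map_one, coe_substAlgHom] at h
  linear_combination -h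

theorem exp_subst_X_zero_add_X_one :
    (exp K).subst (MvPowerSeries.X 0 + MvPowerSeries.X 1 : MvPowerSeries (Fin 2) K) =
      (exp K).subst (MvPowerSeries.X 0 : MvPowerSeries (Fin 2) K) *
        (exp K).subst (MvPowerSeries.X 1 : MvPowerSeries (Fin 2) K) := by
  ext e
  rw [coeff_subst_X_zero_add_X_one, coeff_subst_X_zero_subst_mul_X_one, coeff_exp, coeff_exp,
    coeff_exp, ← map_mul, ← map_natCast (algebraMap ℚ K), ← map_mul]
  congr 1
  have h := Nat.add_choose_mul_factorial_mul_factorial (e 0) (e 1)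
  rw [← Nat.choose_symm_add] at h
  have h0 := Nat.factorial_pos (e 0)
  have h1 := Nat.factorial_pos (e 1)
  field_simp
  exact_mod_cast h

section Subst

variable {σ : Type*} {a b : MvPowerSeries σ K}

theorem constantCoeff_logOneSub_subst (ha : MvPowerSeries.constantCoeff a = 0) :
    MvPowerSeries.constantCoeff ((logOneSub (K := K)).subst a) = 0 :=
  constantCoeff_subst_eq_zero ha _ constantCoeff_logOneSub

theorem exp_subst_logOneSub_subst (ha : MvPowerSeries.constantCoeff a = 0) :
    (exp K).subst ((logOneSub (K := K)).subst a) = 1 - a := by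
  have ha' := HasSubst.of_constantCoeff_zero ha
  rw [← subst_comp_subst_apply (HasSubst.of_constantCoeff_zero' constantCoeff_logOneSub) ha',
    exp_subst_logOneSub, ← coe_substAlgHom ha', map_sub, map_one, coe_substAlgHom, subst_X ha']

theorem logOneSub_subst_one_sub_exp_subst (ha : MvPowerSeries.constantCoeff a = 0) :
    (logOneSub (K := K)).subst (1 - (exp K).subst a) = a := by
  have ha' := HasSubst.of_constantCoeff_zero ha
  have hE : HasSubst (1 - exp K) := HasSubst.of_constantCoeff_zero' (by simp [constantCoeff_exp])
  rw [show 1 - (exp K).subst a = (1 - exp K).subst a by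
      rw [← coe_substAlgHom ha', map_sub, map_one],
    ← subst_comp_subst_apply hE ha', logOneSub_subst_one_sub_exp, subst_X ha']

theorem exp_subst_add (ha : MvPowerSeries.constantCoeff a = 0)
    (hb : MvPowerSeries.constantCoeff b = 0) :
    (exp K).subst (a + b) = (exp K).subst a * (exp K).subst b := by
  have hab : MvPowerSeries.HasSubst ![a, b] :=
    MvPowerSeries.hasSubst_of_constantCoeff_zero (by simp [Fin.forall_fin_two, ha, hb])
  have hsubst (c : MvPowerSeries (Fin 2) K) (hc : MvPowerSeries.constantCoeff c = 0) :
      MvPowerSeries.subst ![a, b] ((exp K).subst c) =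
        (exp K).subst (MvPowerSeries.subst ![a, b] c) :=
    MvPowerSeries.subst_comp_subst_apply (HasSubst.of_constantCoeff_zero hc).const hab _
  have h := congrArg (MvPowerSeries.subst ![a, b]) (exp_subst_X_zero_add_X_one (K := K))
  rw [MvPowerSeries.subst_mul hab, hsubst _ (by simp), hsubst _ (by simp), hsubst _ (by simp),
    MvPowerSeries.subst_add hab, MvPowerSeries.subst_X hab, MvPowerSeries.subst_X hab] at h
  simpa using h

theorem logOneSub_subst_one_sub_mul (ha : MvPowerSeries.constantCoeff a = 0)
    (hb : MvPowerSeries.constantCoeff b = 0) :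
    (logOneSub (K := K)).subst (1 - (1 - a) * (1 - b)) =
      (logOneSub (K := K)).subst a + (logOneSub (K := K)).subst b := by
  have hLa := constantCoeff_logOneSub_subst ha
  have hLb := constantCoeff_logOneSub_subst hb
  rw [← exp_subst_logOneSub_subst ha, ← exp_subst_logOneSub_subst hb, ← exp_subst_add hLa hLb,
    logOneSub_subst_one_sub_exp_subst (by rw [map_add, hLa, hLb, add_zero])]

theorem logOneSub_subst_one_sub_prod {ι : Type*} [DecidableEq ι] (g : ι → MvPowerSeries σ K)
    (I : Finset ι) (hg : ∀ i ∈ I, MvPowerSeries.constantCoeff (g i) = 0) :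
    (logOneSub (K := K)).subst (1 - ∏ i ∈ I, (1 - g i)) =
      ∑ i ∈ I, (logOneSub (K := K)).subst (g i) := by
  induction I using Finset.induction_on with
  | empty => simp [constantCoeff_logOneSub]
  | insert j I hj ih =>
    have hprod := MvPowerSeries.constantCoeff_one_sub_prod_one_sub
      fun i hi => hg i (Finset.mem_insert_of_mem hi)
    rw [Finset.prod_insert hj, Finset.sum_insert hj,
      ← ih fun i hi => hg i (Finset.mem_insert_of_mem hi),
      ← logOneSub_subst_one_sub_mul (hg j (Finset.mem_insert_self j I)) hprod, sub_sub_cancel]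

end Subst

section

variable {σ R : Type*} [CommRing R]

theorem coeff_psubst (f : MvPowerSeries σ R) (G : PowerSeries R) (d : σ →₀ ℕ) :
    MvPowerSeries.coeff d (psubst f G) =
      ∑ k ∈ Finset.range (d.degree + 1), coeff k G * MvPowerSeries.coeff d (f ^ k) :=
  rfl

theorem psubst_eq_subst {f : MvPowerSeries σ R} (hf : MvPowerSeries.constantCoeff f = 0)
    (G : PowerSeries R) : psubst f G = G.subst f := by
  ext d
  rw [coeff_psubst, coeff_subst (HasSubst.of_constantCoeff_zero hf),
    finsum_eq_sum_of_support_subset _ (s := Finset.range (d.degree + 1))]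
  · simp only [smul_eq_mul]
  · intro k hk
    by_contra hkd
    have hdk : (d.degree : ℕ∞) < k := by simpa using hkd
    exact hk (by dsimp only; rw [smul_eq_mul, MvPowerSeries.coeff_of_lt_order (hdk.trans_le
      (MvPowerSeries.le_order_pow_of_constantCoeff_eq_zero k hf)), mul_zero])

theorem coeff_psubst_of_coeff_eq_zero_of_lt (f : MvPowerSeries σ R) {G : PowerSeries R}
    {d : σ →₀ ℕ} {m : ℕ} (hd : d.degree = m) (hG : ∀ k < m, coeff k G = 0) :
    MvPowerSeries.coeff d (psubst f G) = coeff m G * MvPowerSeries.coeff d (f ^ m) := by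
  rw [coeff_psubst, hd, Finset.sum_eq_single_of_mem m (Finset.self_mem_range_succ m)]
  intro k hk hkm
  rw [hG k (lt_of_le_of_ne (Nat.lt_succ_iff.mp (Finset.mem_range.mp hk)) hkm), zero_mul]

theorem coeff_psubst_one_sub_prod_of_notMem [IsAddTorsionFree R] {I : Finset σ} {j : σ} (hj : j ∉ I)
    (G : PowerSeries R) {d : σ →₀ ℕ} (hd : d j ≠ 0) :
    MvPowerSeries.coeff d (psubst (1 - ∏ i ∈ I, (1 - MvPowerSeries.X i)) G) = 0 := by
  rw [coeff_psubst]
  refine Finset.sum_eq_zero fun k _ => ?_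
  rw [MvPowerSeries.coeff_eq_zero_of_pderiv_eq_zero (j := j) ?_ hd, mul_zero]
  rw [Derivation.leibniz_pow, MvPowerSeries.pderiv_one_sub_prod_one_sub_X hj, smul_zero, smul_zero]

theorem partialDeriv_eq_sum_subst (m : ℕ) (G : PowerSeries R) :
    partialDeriv m G = ∑ I : Finset (Fin m),
      ((-1 : ℤ) ^ (m + I.card)) • G.subst (1 - ∏ i ∈ I, (1 - MvPowerSeries.X i)) := by
  simp only [partialDeriv, psubst_eq_subst (MvPowerSeries.constantCoeff_one_sub_prod_one_sub_X _)]

noncomputable def partialDerivLinearMap (m : ℕ) : PowerSeries R →ₗ[R] MvPowerSeries (Fin m) R where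
  toFun := partialDeriv m
  map_add' G H := by
    simp only [partialDeriv_eq_sum_subst, ← Finset.sum_add_distrib, ← smul_add, subst_add
      (HasSubst.of_constantCoeff_zero (MvPowerSeries.constantCoeff_one_sub_prod_one_sub_X _))]
  map_smul' c G := by
    simp only [partialDeriv_eq_sum_subst, Finset.smul_sum, RingHom.id_apply, smul_comm c, subst_smul
      (HasSubst.of_constantCoeff_zero (MvPowerSeries.constantCoeff_one_sub_prod_one_sub_X _))]

theorem coeff_partialDeriv_of_forall_ne_zero [IsAddTorsionFree R] {m : ℕ} {d : Fin m →₀ ℕ}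
    (hd : ∀ i, d i ≠ 0) (G : PowerSeries R) :
    MvPowerSeries.coeff d (partialDeriv m G) =
      MvPowerSeries.coeff d (psubst (1 - ∏ i, (1 - MvPowerSeries.X i)) G) := by
  rw [partialDeriv, map_sum, Finset.sum_eq_single Finset.univ]
  · rw [map_zsmul, Finset.card_univ, Fintype.card_fin, Even.neg_one_pow ⟨m, rfl⟩, one_smul]
  · intro I _ hI
    obtain ⟨j, hj⟩ : ∃ j, j ∉ I := by simpa [Finset.eq_univ_iff_forall] using hI
    rw [map_zsmul, coeff_psubst_one_sub_prod_of_notMem hj G (hd j), smul_zero]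
  · simp

end

theorem partialDeriv_lg {n r : ℕ} (hr : r < n) : partialDeriv n (lg (K := K) r) = 0 := by
  have hlg (I : Finset (Fin n)) :
      (lg (K := K) r).subst (1 - ∏ i ∈ I, (1 - MvPowerSeries.X i) : MvPowerSeries (Fin n) K) =
        (r.factorial : ℚ)⁻¹ • (∑ i ∈ I, (logOneSub (K := K)).subst (MvPowerSeries.X i)) ^ r := by
    have hI := HasSubst.of_constantCoeff_zero
      (MvPowerSeries.constantCoeff_one_sub_prod_one_sub_X (R := K) I)
    rw [lg, subst_smul hI, subst_pow hI,
      logOneSub_subst_one_sub_prod _ _ fun i _ => MvPowerSeries.constantCoeff_X i]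
  simp only [partialDeriv_eq_sum_subst, hlg, pow_add, mul_smul, smul_comm _ ((r.factorial : ℚ)⁻¹),
    ← Finset.smul_sum, ← Finset.powerset_univ]
  rw [Finset.sum_powerset_neg_one_pow_card_smul_sum_pow _ _ (by simpa using hr), smul_zero,
    smul_zero]

theorem eq_zero_of_partialDeriv_eq_zero {n : ℕ} (hn : 0 < n) {H : PowerSeries K}
    (hH : partialDeriv n H = 0) (hlow : ∀ k < n, coeff k H = 0) : H = 0 := by
  have : Nonempty (Fin n) := ⟨⟨0, hn⟩⟩
  suffices ∀ m, coeff m H = 0 from PowerSeries.ext fun m => by rw [this, map_zero]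
  refine fun m => Nat.strong_induction_on m fun m ih => ?_
  rcases lt_or_ge m n with hm | hm
  · exact hlow m hm
  obtain ⟨d, hd, hd0⟩ :=
    Finsupp.exists_degree_eq_and_forall_ne_zero (σ := Fin n) (by simpa using hm)
  have h := congrArg (MvPowerSeries.coeff d) hH
  have := IsAddTorsionFree.of_module_rat K
  rw [coeff_partialDeriv_of_forall_ne_zero hd0, coeff_psubst_of_coeff_eq_zero_of_lt _ hd ih,
    MvPowerSeries.coeff_one_sub_prod_one_sub_X_pow hd, map_zero] at h
  have hunit : IsUnit (d.multinomial : K) := by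
    rw [← map_natCast (algebraMap ℚ K)]
    exact (Ne.isUnit (Nat.cast_ne_zero.mpr (Nat.multinomial_pos _ _).ne')).map _
  exact hunit.mul_left_eq_zero.mp h

theorem lg_eq_X_pow_mul (r : ℕ) :
    ∃ u : PowerSeries K, IsUnit (constantCoeff u) ∧ lg r = X ^ r * u := by
  obtain ⟨L, hL⟩ := X_dvd_iff.mpr (constantCoeff_logOneSub (K := K))
  have hL0 : constantCoeff L = -1 := by
    have h := congrArg (coeff 1) hL
    rw [coeff_succ_X_mul, coeff_zero_eq_constantCoeff_apply] at h
    simp [← h, logOneSub]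
  refine ⟨(r.factorial : ℚ)⁻¹ • L ^ r, ?_, by rw [lg, hL, mul_pow, mul_smul_comm]⟩
  rw [← algebraMap_smul K, smul_eq_C_mul, map_mul, constantCoeff_C, map_pow, hL0]
  exact ((Ne.isUnit (by positivity)).map _).mul ((isUnit_neg_one).pow r)

theorem exists_mem_span_lg_coeff_eq (G : PowerSeries K) (n : ℕ) :
    ∃ P ∈ Submodule.span K (lg (K := K) '' Set.Iio n), ∀ k < n, coeff k P = coeff k G := by
  induction n with
  | zero => exact ⟨0, zero_mem _, by simp⟩
  | succ n ih =>
    obtain ⟨P, hP, hPG⟩ := ih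
    obtain ⟨u, hu, hlg⟩ := lg_eq_X_pow_mul (K := K) n
    have hcoeff (k : ℕ) : coeff k (lg (K := K) n) = if n ≤ k then coeff (k - n) u else 0 := by
      rw [hlg, coeff_X_pow_mul']
    set c := (coeff n G - coeff n P) * ↑hu.unit⁻¹
    refine ⟨P + c • lg n, add_mem (Submodule.span_mono (Set.image_mono
      (Set.Iio_subset_Iio n.le_succ)) hP) (Submodule.smul_mem _ _
      (Submodule.subset_span ⟨n, n.lt_succ_self, rfl⟩)), fun k hk => ?_⟩
    rw [map_add, map_smul, hcoeff, smul_eq_mul]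
    rcases (Nat.lt_succ_iff.mp hk).lt_or_eq with hk | rfl
    · rw [if_neg (by omega), mul_zero, add_zero, hPG k hk]
    · rw [if_pos le_rfl, Nat.sub_self, coeff_zero_eq_constantCoeff_apply, mul_assoc,
        hu.val_inv_mul]
      ring

theorem span_lg_le_ker_partialDerivLinearMap (n : ℕ) :
    Submodule.span K (lg '' Set.Iio n) ≤ LinearMap.ker (partialDerivLinearMap (R := K) n) := by
  rw [Submodule.span_le]
  rintro _ ⟨r, hr, rfl⟩
  exact partialDeriv_lg hr

theorem ker_partialDerivLinearMap {n : ℕ} (hn : 0 < n) :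
    LinearMap.ker (partialDerivLinearMap (R := K) n) = Submodule.span K (lg '' Set.Iio n) := by
  refine le_antisymm (fun G hG => ?_) (span_lg_le_ker_partialDerivLinearMap n)
  obtain ⟨P, hP, hPG⟩ := exists_mem_span_lg_coeff_eq G n
  have hGP := sub_mem hG (span_lg_le_ker_partialDerivLinearMap n hP)
  rwa [sub_eq_zero.mp (eq_zero_of_partialDeriv_eq_zero hn hGP fun k hk => by
    rw [map_sub, hPG k hk, sub_self])]

/-- For `n > 0`, the kernel of `∂^{n-1} : K[[x]] → K[[x₁,…,x_n]]` is the `K`-linear span of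
the series `lg_r(x)`, `0 ≤ r < n`. -/
theorem ker_partialDeriv (n : ℕ) (hn : 0 < n) (G : PowerSeries K) :
    partialDeriv n G = 0 ↔ G ∈ Submodule.span K (lg (K := K) '' Set.Iio n) := by
  rw [← ker_partialDerivLinearMap hn]
  exact (LinearMap.mem_ker (f := partialDerivLinearMap n)).symm
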